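/- Fix c > 0. The function x ↦ (B_c(x) - R_c(x)) / (x(c-x)) is positive and strictly decreasing on (0, c/2], where B_c(x) = Γ(x)Γ(c-x)/Γ(c) and R_c(x) = -ψ(x) - ψ(c-x) - 2γ. -/

import Mathlib

open Filter Topology Set Nat

noncomputable def digamma (x : ℝ) : ℝ := deriv (fun y : ℝ => Real.log (Real.Gamma y)) x

noncomputable def Bc (c x : ℝ) : ℝ := Real.Gamma x * Real.Gamma (c - x) / Real.Gamma c

noncomputable def Rc (c x : ℝ) : ℝ :=
  -digamma x - digamma (c - x) - 2 * Real.eulerMascheroniConstant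

/-! With `u = x (c - x)`, increasing on `(0, c/2]`, and `q n = (n + 1) (n + 1 + c)`, one has
`(x + n + 1) (c - x + n + 1) = q n + u`. Euler's limit formula for `Γ` gives
`B_c(x) = (c / u) ∏ q n / (q n + u)`, and the series `ψ(x) = -γ - 1/x + ∑ (1/(n+1) - 1/(x+n+1))`
gives `R_c(x) = c/u - ∑ (2u / ((n+1) (q n + u)) + c / (q n + u))`. Telescoping with the partial
products `P n u = ∏_{j<n} q j / (q j + u)` turns `(B_c(x) - R_c(x)) / u` into
`∑ (2 / ((n+1) (q n + u)) + c ((1 - P n u) / u) / (q n + u))`. Each `P n` is convex in `u` with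
`P n 0 = 1`, so the chord slope `(1 - P n u) / u` is nonnegative and nonincreasing; hence every
summand is positive and strictly decreasing in `u`. -/

noncomputable def partialProd (q : ℕ → ℝ) (n : ℕ) (u : ℝ) : ℝ :=
  ∏ j ∈ Finset.range n, q j / (q j + u)

section PartialProd

variable {q : ℕ → ℝ} {u : ℝ}

lemma partialProd_zero (q : ℕ → ℝ) (u : ℝ) : partialProd q 0 u = 1 := Finset.prod_range_zero _

lemma partialProd_succ (q : ℕ → ℝ) (n : ℕ) (u : ℝ) :
    partialProd q (n + 1) u = partialProd q n u * (q n / (q n + u)) :=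
  Finset.prod_range_succ _ _

lemma partialProd_zero_right (hq : ∀ j, 0 < q j) (n : ℕ) : partialProd q n 0 = 1 :=
  Finset.prod_eq_one fun j _ => by rw [add_zero, div_self (hq j).ne']

lemma partialProd_nonneg (hq : ∀ j, 0 < q j) (n : ℕ) (hu : 0 ≤ u) : 0 ≤ partialProd q n u :=
  Finset.prod_nonneg fun j _ => by have := hq j; positivity

lemma antitoneOn_div_add {a : ℝ} (ha : 0 < a) : AntitoneOn (fun u : ℝ => a / (a + u)) (Ici 0) :=
  fun u (hu : 0 ≤ u) _ _ huv => div_le_div_of_nonneg_left ha.le (by linarith) (by linarith)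

lemma convexOn_div_add {a : ℝ} (ha : 0 < a) : ConvexOn ℝ (Ici 0) (fun u : ℝ => a / (a + u)) := by
  have := ((convexOn_zpow (𝕜 := ℝ) (-1)).translate_right a).smul ha.le
  refine (this.subset (fun u (hu : 0 ≤ u) => ?_) (convex_Ici 0)).congr fun u _ => ?_
  · show 0 < a + u
    linarith
  · simp [div_eq_mul_inv]

lemma antitoneOn_partialProd (hq : ∀ j, 0 < q j) (n : ℕ) :
    AntitoneOn (partialProd q n) (Ici 0) := fun u hu _ hv huv =>
  Finset.prod_le_prod (fun j _ => by have := hq j; have : (0 : ℝ) ≤ _ := hv; positivity)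
    fun j _ => antitoneOn_div_add (hq j) hu hv huv

lemma partialProd_le_one (hq : ∀ j, 0 < q j) (n : ℕ) (hu : 0 ≤ u) : partialProd q n u ≤ 1 :=
  partialProd_zero_right hq n ▸ antitoneOn_partialProd hq n self_mem_Ici hu hu

lemma convexOn_partialProd (hq : ∀ j, 0 < q j) (n : ℕ) : ConvexOn ℝ (Ici 0) (partialProd q n) := by
  induction n with
  | zero =>
    exact (convexOn_const (1 : ℝ) (convex_Ici 0)).congr fun u _ => (partialProd_zero q u).symm
  | succ n ih =>
    rw [show partialProd q (n + 1) = partialProd q n * fun u => q n / (q n + u) from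
      funext (partialProd_succ q n)]
    exact ih.mul (convexOn_div_add (hq n)) (fun u hu => partialProd_nonneg hq n hu)
      (fun u (hu : 0 ≤ u) => by have := hq n; positivity)
      ((antitoneOn_partialProd hq n).monovaryOn (antitoneOn_div_add (hq n)))

lemma antitoneOn_one_sub_partialProd_div (hq : ∀ j, 0 < q j) (n : ℕ) :
    AntitoneOn (fun u => (1 - partialProd q n u) / u) (Ioi 0) :=
    fun a (ha : 0 < a) b (hb : 0 < b) hab => by
  have := (convexOn_partialProd hq n).secant_mono self_mem_Ici ha.le hb.le ha.ne' hb.ne' hab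
  rw [partialProd_zero_right hq, sub_zero, sub_zero] at this
  simpa only [← neg_sub (1 : ℝ), neg_div, neg_le_neg_iff] using this

lemma hasSum_partialProd_div (hq : ∀ j, 0 < q j) (hu : 0 < u) {L : ℝ}
    (hL : Tendsto (fun n => partialProd q n u) atTop (𝓝 L)) :
    HasSum (fun n => partialProd q n u / (q n + u)) ((1 - L) / u) := by
  have hterm (n : ℕ) :
      partialProd q n u / (q n + u) = (partialProd q n u - partialProd q (n + 1) u) / u := by
    have := hq n
    rw [partialProd_succ]
    field_simp
    ring
  rw [hasSum_iff_tendsto_nat_of_nonneg fun n => by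
    have := hq n; have := partialProd_nonneg hq n hu.le; positivity]
  simp_rw [hterm, ← Finset.sum_div, Finset.sum_range_sub', partialProd_zero]
  exact (tendsto_const_nhds.sub hL).div_const u

end PartialProd

lemma summable_div_add_one_sq (b : ℝ) : Summable (fun k : ℕ => b / ((k : ℝ) + 1) ^ 2) := by
  refine (((summable_nat_add_iff 1).mpr
    (Real.summable_one_div_nat_pow.mpr one_lt_two)).mul_left b).congr fun k => ?_
  push_cast
  ring

lemma abs_one_div_sub_one_div_le {y b : ℝ} (hy : 0 < y) (hyb : y ≤ b) (k : ℕ) :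
    |1 / ((k : ℝ) + 1) - 1 / (y + k + 1)| ≤ b / ((k : ℝ) + 1) ^ 2 := by
  have hk : (0 : ℝ) < k + 1 := by positivity
  have hyk : 0 < y + k + 1 := by positivity
  have : 1 / ((k : ℝ) + 1) - 1 / (y + k + 1) = y / ((k + 1) * (y + k + 1)) := by
    field_simp
    ring
  rw [this, abs_of_pos (by positivity), sq]
  gcongr
  all_goals linarith

lemma hasDerivAt_logGammaSeq_add_log {y : ℝ} (hy : 0 < y) (n : ℕ) :
    HasDerivAt (fun z => Real.BohrMollerup.logGammaSeq z n + Real.log z)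
      (-(harmonic n - Real.log n)
        + ∑ k ∈ Finset.range n, (1 / ((k : ℝ) + 1) - 1 / (y + k + 1))) y := by
  have hsum : HasDerivAt (fun z => ∑ m ∈ Finset.range (n + 1), Real.log (z + m))
      (∑ m ∈ Finset.range (n + 1), (y + m)⁻¹) y :=
    HasDerivAt.fun_sum fun m _ => by
      simpa using ((hasDerivAt_id y).add_const (m : ℝ)).log (by positivity)
  refine ((((hasDerivAt_mul_const (Real.log n)).add_const (Real.log n !)).fun_sub hsum).fun_add
    (Real.hasDerivAt_log hy.ne')).congr_deriv ?_
  simp only [harmonic, Finset.sum_range_succ' _ n]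
  push_cast
  simp only [Finset.sum_sub_distrib, one_div, add_zero, add_assoc]
  ring

lemma hasDerivAt_log_Gamma {x : ℝ} (hx : 0 < x) :
    HasDerivAt (fun y => Real.log (Real.Gamma y))
      (-Real.eulerMascheroniConstant - 1 / x
        + ∑' k : ℕ, (1 / ((k : ℝ) + 1) - 1 / (x + k + 1))) x := by
  -- `log Γ y + log y = log Γ (y + 1)` has approximants whose derivatives are a constant plus the
  -- partial sums of the series, which converge uniformly on `(0, x + 1)` by the M-test.
  have hunif := (Real.tendsto_harmonic_sub_log.neg.tendstoUniformlyOn_const (Ioo 0 (x + 1))).add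
    (tendstoUniformlyOn_tsum_nat (summable_div_add_one_sq (x + 1)) fun k y hy =>
      abs_one_div_sub_one_div_le hy.1 hy.2.le k)
  have hderiv : HasDerivAt (fun y => Real.log (Real.Gamma y) + Real.log y)
      (-Real.eulerMascheroniConstant + ∑' k : ℕ, (1 / ((k : ℝ) + 1) - 1 / (x + k + 1))) x :=
    hasDerivAt_of_tendstoUniformlyOn isOpen_Ioo hunif
      (Eventually.of_forall fun n y hy => hasDerivAt_logGammaSeq_add_log hy.1 n)
      (fun y hy => (Real.BohrMollerup.tendsto_log_gamma hy.1).add tendsto_const_nhds)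
      ⟨hx, by linarith⟩
  have := hderiv.fun_sub (Real.hasDerivAt_log hx.ne')
  simp only [add_sub_cancel_right] at this
  exact this.congr_deriv (by ring)

lemma hasSum_digamma {x : ℝ} (hx : 0 < x) :
    HasSum (fun k : ℕ => 1 / ((k : ℝ) + 1) - 1 / (x + k + 1))
      (digamma x + Real.eulerMascheroniConstant + 1 / x) := by
  have hsum : Summable (fun k : ℕ => 1 / ((k : ℝ) + 1) - 1 / (x + k + 1)) :=
    (summable_div_add_one_sq x).of_norm_bounded fun k => abs_one_div_sub_one_div_le hx le_rfl k
  rw [digamma, (hasDerivAt_log_Gamma hx).deriv]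
  convert hsum.hasSum using 1
  ring

noncomputable def betaQuad (c : ℝ) (n : ℕ) : ℝ := (n + 1) * (n + 1 + c)

section Beta

variable {c x : ℝ}

lemma betaQuad_pos (hc : 0 ≤ c) (n : ℕ) : 0 < betaQuad c n := by
  unfold betaQuad
  positivity

lemma add_mul_sub_add_eq_betaQuad (c x : ℝ) (n : ℕ) :
    (x + (n + 1)) * (c - x + (n + 1)) = betaQuad c n + x * (c - x) := by
  unfold betaQuad
  ring

lemma prod_add_mul_prod_sub_add (c x : ℝ) (n : ℕ) :
    (∏ j ∈ Finset.range (n + 1), (x + j)) * ∏ j ∈ Finset.range (n + 1), (c - x + j)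
      = x * (c - x) * ∏ j ∈ Finset.range n, (betaQuad c j + x * (c - x)) := by
  simp only [Finset.prod_range_succ' _ n, ← add_mul_sub_add_eq_betaQuad, Finset.prod_mul_distrib,
    Nat.cast_add, Nat.cast_one, Nat.cast_zero, add_zero]
  ring

lemma factorial_mul_prod_add (c : ℝ) (n : ℕ) :
    (n ! : ℝ) * ∏ j ∈ Finset.range (n + 1), (c + j) = c * ∏ j ∈ Finset.range n, betaQuad c j := by
  rw [← Finset.prod_range_add_one_eq_factorial, Finset.prod_range_succ', Nat.cast_prod]
  simp only [betaQuad, Finset.prod_mul_distrib, Nat.cast_add, Nat.cast_one, Nat.cast_zero, add_zero]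
  ring_nf

lemma GammaSeq_mul_GammaSeq_div_GammaSeq (hx : 0 < x) (hxc : x < c) {n : ℕ} (hn : n ≠ 0) :
    Real.GammaSeq x n * Real.GammaSeq (c - x) n / Real.GammaSeq c n
      = c / (x * (c - x)) * partialProd (betaQuad c) n (x * (c - x)) := by
  have hc : 0 < c := hx.trans hxc
  have hcx : c - x ≠ 0 := (sub_pos.2 hxc).ne'
  have hn' : (0 : ℝ) < n := by positivity
  have hpow : (n : ℝ) ^ x * (n : ℝ) ^ (c - x) = (n : ℝ) ^ c := by
    rw [← Real.rpow_add hn', add_sub_cancel]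
  have hprod (s : ℝ) (hs : 0 < s) : 0 < ∏ j ∈ Finset.range (n + 1), (s + j) :=
    Finset.prod_pos fun j _ => by positivity
  have := hprod x hx
  have := hprod (c - x) (sub_pos.2 hxc)
  have := hprod c hc
  have : 0 < ∏ j ∈ Finset.range n, (betaQuad c j + x * (c - x)) :=
    Finset.prod_pos fun j _ => add_pos (betaQuad_pos hc.le j) (mul_pos hx (sub_pos.2 hxc))
  unfold Real.GammaSeq partialProd
  rw [Finset.prod_div_distrib, ← hpow]
  field_simp
  linear_combination (x * (c - x) * ∏ j ∈ Finset.range n, (betaQuad c j + x * (c - x))) *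
    factorial_mul_prod_add c n
    - (c * ∏ j ∈ Finset.range n, betaQuad c j) * prod_add_mul_prod_sub_add c x n

lemma tendsto_partialProd_betaQuad (hx : 0 < x) (hxc : x < c) :
    Tendsto (fun n => partialProd (betaQuad c) n (x * (c - x))) atTop
      (𝓝 (x * (c - x) / c * Bc c x)) := by
  have hc : 0 < c := hx.trans hxc
  have hcx : c - x ≠ 0 := (sub_pos.2 hxc).ne'
  have hlim := (((Real.GammaSeq_tendsto_Gamma x).mul (Real.GammaSeq_tendsto_Gamma (c - x))).div
    (Real.GammaSeq_tendsto_Gamma c) (Real.Gamma_pos_of_pos hc).ne').const_mul (x * (c - x) / c)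
  refine hlim.congr' ((eventually_ne_atTop 0).mono fun n hn => ?_)
  simp only [Pi.div_apply]
  rw [GammaSeq_mul_GammaSeq_div_GammaSeq hx hxc hn]
  field_simp

end Beta

section Ratio

variable {c x u v : ℝ}

lemma hasSum_sub_Rc (hx : 0 < x) (hxc : x < c) :
    HasSum (fun n : ℕ => x * (c - x) * (2 / ((n + 1) * (betaQuad c n + x * (c - x))))
        + c / (betaQuad c n + x * (c - x)))
      (c / (x * (c - x)) - Rc c x) := by
  have hcx : 0 < c - x := sub_pos.2 hxc
  convert (hasSum_digamma hx).add (hasSum_digamma hcx) using 1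
  · funext n
    have : (0 : ℝ) < n + 1 := by positivity
    have : 0 < x + (n + 1) := by positivity
    have : 0 < c - x + (n + 1) := by positivity
    rw [← add_mul_sub_add_eq_betaQuad]
    field_simp
    ring
  · rw [Rc]
    field_simp
    ring

noncomputable def betaTerm (c u : ℝ) (n : ℕ) : ℝ :=
  2 / ((n + 1) * (betaQuad c n + u))
    + c * ((1 - partialProd (betaQuad c) n u) / u) / (betaQuad c n + u)

lemma hasSum_betaTerm (hx : 0 < x) (hxc : x < c) :
    HasSum (betaTerm c (x * (c - x))) ((Bc c x - Rc c x) / (x * (c - x))) := by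
  have hc : 0 < c := hx.trans hxc
  have hcx : 0 < c - x := sub_pos.2 hxc
  have hP := hasSum_partialProd_div (betaQuad_pos hc.le) (mul_pos hx hcx)
    (tendsto_partialProd_betaQuad hx hxc)
  have hu : x * (c - x) ≠ 0 := (mul_pos hx hcx).ne'
  have hsum := ((hasSum_sub_Rc hx hxc).div_const (x * (c - x))).sub
    (hP.mul_left (c / (x * (c - x))))
  rw [show (Bc c x - Rc c x) / (x * (c - x)) = (c / (x * (c - x)) - Rc c x) / (x * (c - x))
      - c / (x * (c - x)) * ((1 - x * (c - x) / c * Bc c x) / (x * (c - x))) by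
    field_simp
    ring]
  refine hsum.congr_fun fun n => ?_
  have := betaQuad_pos hc.le n
  rw [betaTerm]
  field_simp
  ring

lemma betaTerm_pos (hc : 0 < c) (hu : 0 < u) (n : ℕ) : 0 < betaTerm c u n := by
  have := betaQuad_pos hc.le n
  have := partialProd_le_one (betaQuad_pos hc.le) n hu.le
  have : 0 ≤ 1 - partialProd (betaQuad c) n u := by linarith
  rw [betaTerm]
  positivity

lemma betaTerm_lt (hc : 0 < c) (hu : 0 < u) (huv : u < v) (n : ℕ) :
    betaTerm c v n < betaTerm c u n := by
  have hv := hu.trans huv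
  have := betaQuad_pos hc.le n
  have hslope : (1 - partialProd (betaQuad c) n v) / v ≤ (1 - partialProd (betaQuad c) n u) / u :=
    antitoneOn_one_sub_partialProd_div (betaQuad_pos hc.le) n hu hv huv.le
  have := partialProd_le_one (betaQuad_pos hc.le) n hv.le
  have : 0 ≤ (1 - partialProd (betaQuad c) n v) / v := div_nonneg (by linarith) hv.le
  rw [betaTerm, betaTerm]
  apply add_lt_add_of_lt_of_le
  · gcongr
  · have := partialProd_le_one (betaQuad_pos hc.le) n hu.le
    gcongr c * ?_ / (betaQuad c n + ?_)

end Ratio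

theorem stmt_12 (c : ℝ) (hc : 0 < c) :
    (∀ x ∈ Set.Ioc 0 (c / 2), 0 < (Bc c x - Rc c x) / (x * (c - x))) ∧
      StrictAntiOn (fun x => (Bc c x - Rc c x) / (x * (c - x))) (Set.Ioc 0 (c / 2)) := by
  have hmem {x : ℝ} (hx : x ∈ Ioc 0 (c / 2)) : x < c := by linarith [hx.2]
  have hu {x : ℝ} (hx : x ∈ Ioc 0 (c / 2)) : 0 < x * (c - x) := mul_pos hx.1 (by linarith [hmem hx])
  refine ⟨fun x hx => ?_, fun a ha b hb hab => ?_⟩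
  · exact hasSum_lt (fun n => (betaTerm_pos hc (hu hx) n).le) (betaTerm_pos hc (hu hx) 0)
      hasSum_zero (hasSum_betaTerm hx.1 (hmem hx))
  · have hab' : a * (c - a) < b * (c - b) := by nlinarith [hb.2]
    exact hasSum_lt (fun n => (betaTerm_lt hc (hu ha) hab' n).le) (betaTerm_lt hc (hu ha) hab' 0)
      (hasSum_betaTerm hb.1 (hmem hb)) (hasSum_betaTerm ha.1 (hmem ha))
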